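/- Let A be a finite nonempty set, let π₀ : A → ℝ satisfy π₀(a) > 0 for all a ∈ A and ∑_{a∈A} π₀(a) = 1, let n ≥ 1, and let Q^(1), …, Q^(n) : A → ℝ. Suppose that (1/n)·∑_{i} max_{a∈A} Q^(i)(a) > max_{a∈A} (1/n)·∑_{i} Q^(i)(a) and that max_{a∈A} (1/n)·∑_{i} Q^(i)(a) > ∑_{a∈A} π₀(a)·(1/n)·∑_{i} Q^(i)(a). Then there exists a temperature w ∈ (0, ∞) such that (1/n)·∑_{i=1}^{n} w·log(∑_{a∈A} π₀(a)·exp(Q^(i)(a)/w)) = max_{a∈A} (1/n)·∑_{i=1}^{n} Q^(i)(a), i.e., an unbiased temperature exists at which the ensemble average of mellowmax values matches the maximum of the ensemble-averaged values. -/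

import Mathlib

/-!
As `w → 0⁺` the mellowmax of each ensemble member tends to its maximum, since
`max Q + w log π₀(a*) ≤ mmax_w(Q) ≤ max Q` for a maximiser `a*`. As `w → ∞` it tends to the
`π₀`-mean, because `mmax_w(Q) = g(1/w)/(1/w)` for the cumulant generating function
`g t = log ∑ π₀(a) exp(t Q(a))`, which vanishes at `0` with derivative the mean there.
The ensemble average of mellowmax values is continuous in `w > 0` and so, by the intermediate
value theorem, takes every value strictly between the averaged mean and the averaged maxima.
-/

open Filter Topology Set

noncomputable section

variable {A : Type*} [Fintype A] {π₀ : A → ℝ}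

def mellowmax (π₀ : A → ℝ) (w : ℝ) (Q : A → ℝ) : ℝ :=
  w * Real.log (∑ a, π₀ a * Real.exp (Q a / w))

lemma sum_mul_exp_pos [Nonempty A] (hπpos : ∀ a, 0 < π₀ a) (f : A → ℝ) :
    0 < ∑ a, π₀ a * Real.exp (f a) :=
  Finset.sum_pos (fun a _ => mul_pos (hπpos a) (Real.exp_pos _)) Finset.univ_nonempty

lemma add_mul_log_le_mellowmax (hπpos : ∀ a, 0 < π₀ a) {w : ℝ} (hw : 0 < w) (Q : A → ℝ)
    (a : A) : Q a + w * Real.log (π₀ a) ≤ mellowmax π₀ w Q := by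
  have hterm : 0 < π₀ a * Real.exp (Q a / w) := mul_pos (hπpos a) (Real.exp_pos _)
  have hlog : Real.log (π₀ a) + Q a / w ≤ Real.log (∑ b, π₀ b * Real.exp (Q b / w)) :=
    calc Real.log (π₀ a) + Q a / w = Real.log (π₀ a * Real.exp (Q a / w)) := by
          rw [Real.log_mul (hπpos a).ne' (Real.exp_pos _).ne', Real.log_exp]
      _ ≤ _ := Real.log_le_log hterm <| Finset.single_le_sum
          (f := fun b => π₀ b * Real.exp (Q b / w))
          (fun b _ => (mul_pos (hπpos b) (Real.exp_pos _)).le) (Finset.mem_univ a)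
  calc Q a + w * Real.log (π₀ a) = w * (Real.log (π₀ a) + Q a / w) := by
        field_simp; ring
    _ ≤ mellowmax π₀ w Q := mul_le_mul_of_nonneg_left hlog hw.le

lemma mellowmax_le_sup' [Nonempty A] (hπpos : ∀ a, 0 < π₀ a) (hπsum : ∑ a, π₀ a = 1)
    {w : ℝ} (hw : 0 < w) (Q : A → ℝ) :
    mellowmax π₀ w Q ≤ Finset.univ.sup' Finset.univ_nonempty Q := by
  set S := Finset.univ.sup' Finset.univ_nonempty Q
  have hsum : ∑ a, π₀ a * Real.exp (Q a / w) ≤ Real.exp (S / w) :=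
    calc ∑ a, π₀ a * Real.exp (Q a / w) ≤ ∑ a, π₀ a * Real.exp (S / w) := by
          gcongr with a
          exacts [(hπpos a).le, Finset.le_sup' Q (Finset.mem_univ a)]
      _ = Real.exp (S / w) := by rw [← Finset.sum_mul, hπsum, one_mul]
  calc mellowmax π₀ w Q ≤ w * (S / w) := by
        unfold mellowmax
        gcongr
        rw [← Real.log_exp (S / w)]
        exact Real.log_le_log (sum_mul_exp_pos hπpos _) hsum
    _ = S := by field_simp

lemma tendsto_mellowmax_nhdsGT_zero [Nonempty A] (hπpos : ∀ a, 0 < π₀ a)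
    (hπsum : ∑ a, π₀ a = 1) (Q : A → ℝ) :
    Tendsto (fun w => mellowmax π₀ w Q) (𝓝[>] 0)
      (𝓝 (Finset.univ.sup' Finset.univ_nonempty Q)) := by
  obtain ⟨a, -, ha⟩ := Finset.exists_mem_eq_sup' Finset.univ_nonempty Q
  have hlower : Tendsto (fun w => Q a + w * Real.log (π₀ a)) (𝓝[>] 0) (𝓝 (Q a)) :=
    tendsto_nhdsWithin_of_tendsto_nhds <| by
      simpa using ((continuous_id.mul continuous_const).const_add (Q a)).tendsto
        (f := fun w : ℝ => Q a + w * Real.log (π₀ a)) 0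
  rw [ha]
  refine tendsto_of_tendsto_of_tendsto_of_le_of_le' hlower tendsto_const_nhds ?_ ?_ <;>
    filter_upwards [self_mem_nhdsWithin] with w hw
  · exact add_mul_log_le_mellowmax hπpos hw Q a
  · exact ha ▸ mellowmax_le_sup' hπpos hπsum hw Q

lemma hasDerivAt_log_sum_mul_exp_mul (hπsum : ∑ a, π₀ a = 1) (Q : A → ℝ) :
    HasDerivAt (fun t => Real.log (∑ a, π₀ a * Real.exp (t * Q a))) (∑ a, π₀ a * Q a) 0 := by
  have hsum : HasDerivAt (fun t => ∑ a, π₀ a * Real.exp (t * Q a))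
      (∑ a, π₀ a * (Real.exp (0 * Q a) * Q a)) 0 :=
    HasDerivAt.fun_sum fun a _ => ((hasDerivAt_mul_const (Q a)).exp).const_mul (π₀ a)
  convert hsum.log (by simp [hπsum]) using 1
  simp [hπsum]

lemma tendsto_mellowmax_atTop (hπsum : ∑ a, π₀ a = 1) (Q : A → ℝ) :
    Tendsto (fun w => mellowmax π₀ w Q) atTop (𝓝 (∑ a, π₀ a * Q a)) := by
  refine ((hasDerivAt_log_sum_mul_exp_mul hπsum Q).tendsto_slope_zero_right.comp
    tendsto_inv_atTop_nhdsGT_zero).congr fun w => ?_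
  simp [mellowmax, hπsum, div_eq_inv_mul]

lemma continuousOn_mellowmax [Nonempty A] (hπpos : ∀ a, 0 < π₀ a) (Q : A → ℝ) :
    ContinuousOn (fun w => mellowmax π₀ w Q) (Ioi 0) := by
  refine continuousOn_id.mul (ContinuousOn.log ?_ fun w _ => (sum_mul_exp_pos hπpos _).ne')
  exact continuousOn_finsetSum _ fun a _ => continuousOn_const.mul <|
    (continuousOn_const.div continuousOn_id fun _ hw => (ne_of_gt hw)).rexp

end

theorem exists_unbiased_temperature_general
    {A : Type*} [Fintype A] [Nonempty A]
    (π₀ : A → ℝ) (hπpos : ∀ a, 0 < π₀ a) (hπsum : ∑ a, π₀ a = 1)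
    (n : ℕ) (Q : Fin n → A → ℝ)
    (hgap : Finset.univ.sup' Finset.univ_nonempty
        (fun a => (1 / (n : ℝ)) * ∑ i, Q i a) <
      (1 / (n : ℝ)) * ∑ i, Finset.univ.sup' Finset.univ_nonempty (Q i))
    (hmean : ∑ a, π₀ a * ((1 / (n : ℝ)) * ∑ i, Q i a) <
      Finset.univ.sup' Finset.univ_nonempty
        (fun a => (1 / (n : ℝ)) * ∑ i, Q i a)) :
    ∃ w : ℝ, 0 < w ∧
      (1 / (n : ℝ)) * ∑ i, w * Real.log (∑ a, π₀ a * Real.exp (Q i a / w)) =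
        Finset.univ.sup' Finset.univ_nonempty
          (fun a => (1 / (n : ℝ)) * ∑ i, Q i a) := by
  set F : ℝ → ℝ := fun w => (1 / (n : ℝ)) * ∑ i, mellowmax π₀ w (Q i)
  have hF_zero : Tendsto F (𝓝[>] 0)
      (𝓝 ((1 / (n : ℝ)) * ∑ i, Finset.univ.sup' Finset.univ_nonempty (Q i))) :=
    (tendsto_finsetSum _ fun i _ =>
      tendsto_mellowmax_nhdsGT_zero hπpos hπsum (Q i)).const_mul _
  have hF_top : Tendsto F atTop (𝓝 (∑ a, π₀ a * ((1 / (n : ℝ)) * ∑ i, Q i a))) := by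
    convert (tendsto_finsetSum _ fun i _ =>
      tendsto_mellowmax_atTop hπsum (Q i)).const_mul (1 / (n : ℝ)) using 2
    simp only [Finset.mul_sum]
    rw [Finset.sum_comm]
    exact Finset.sum_congr rfl fun _ _ => Finset.sum_congr rfl fun _ _ => by ring
  have hF_cont : ContinuousOn F (Ioi 0) :=
    continuousOn_const.mul <| continuousOn_finsetSum _ fun i _ =>
      continuousOn_mellowmax hπpos (Q i)
  obtain ⟨w, hw, hFw⟩ := isPreconnected_Ioi.intermediate_value_Ioo
    (le_principal_iff.2 (Ioi_mem_atTop 0)) (le_principal_iff.2 self_mem_nhdsWithin) hF_cont hF_top hF_zero ⟨hmean, hgap⟩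
  exact ⟨w, hw, hFw⟩

/-- Existence of an unbiased temperature, at which the ensemble average
of mellowmax values matches the maximum of the ensemble-averaged values. -/
theorem exists_unbiased_temperature
    {A : Type*} [Fintype A] [Nonempty A]
    (π₀ : A → ℝ) (hπpos : ∀ a, 0 < π₀ a) (hπsum : ∑ a, π₀ a = 1)
    (n : ℕ) (hn : 1 ≤ n) (Q : Fin n → A → ℝ)
    (hgap : Finset.univ.sup' Finset.univ_nonempty
        (fun a => (1 / (n : ℝ)) * ∑ i, Q i a) <
      (1 / (n : ℝ)) * ∑ i, Finset.univ.sup' Finset.univ_nonempty (Q i))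
    (hmean : ∑ a, π₀ a * ((1 / (n : ℝ)) * ∑ i, Q i a) <
      Finset.univ.sup' Finset.univ_nonempty
        (fun a => (1 / (n : ℝ)) * ∑ i, Q i a)) :
    ∃ w : ℝ, 0 < w ∧
      (1 / (n : ℝ)) * ∑ i, w * Real.log (∑ a, π₀ a * Real.exp (Q i a / w)) =
        Finset.univ.sup' Finset.univ_nonempty
          (fun a => (1 / (n : ℝ)) * ∑ i, Q i a) :=
  exists_unbiased_temperature_general π₀ hπpos hπsum n Q hgap hmean
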